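/- Let θ : ℝ → ℝ be differentiable with θ' = k₃ nowhere zero, and let r, f : ℝ → ℝ be differentiable with r' = f·k₃ and f' = k₃·r. Define A(s) = -r(s)·sinh(θ(s)) + f(s)·cosh(θ(s)) and B(s) = r(s)·cosh(θ(s)) - f(s)·sinh(θ(s)). Then A and B are constant functions. -/

import Mathlib

open Real

theorem exists_forall_eq_of_hasDerivAt_zero {𝕜 G : Type*} [RCLike 𝕜] [NormedAddCommGroup G]
    [NormedSpace 𝕜 G] {g : 𝕜 → G} (hg : ∀ x, HasDerivAt g 0 x) : ∃ a, ∀ x, g x = a :=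
  ⟨g 0, fun x =>
    is_const_of_deriv_eq_zero (fun y => (hg y).differentiableAt) (fun y => (hg y).deriv) x 0⟩

section HyperbolicRotation

variable {θ r f : ℝ → ℝ} {k x : ℝ}

theorem hasDerivAt_neg_mul_sinh_add_mul_cosh (hθ : HasDerivAt θ k x)
    (hr : HasDerivAt r (f x * k) x) (hf : HasDerivAt f (k * r x) x) :
    HasDerivAt (fun s => -(r s * sinh (θ s)) + f s * cosh (θ s)) 0 x :=
  ((hr.mul hθ.sinh).neg.add (hf.mul hθ.cosh)).congr_deriv (by ring)

theorem hasDerivAt_mul_cosh_sub_mul_sinh (hθ : HasDerivAt θ k x)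
    (hr : HasDerivAt r (f x * k) x) (hf : HasDerivAt f (k * r x) x) :
    HasDerivAt (fun s => r s * cosh (θ s) - f s * sinh (θ s)) 0 x :=
  ((hr.mul hθ.cosh).sub (hf.mul hθ.sinh)).congr_deriv (by ring)

end HyperbolicRotation

theorem stmt_16_general (θ k₃ r f : ℝ → ℝ)
    (hθ : Differentiable ℝ θ) (hθ' : ∀ s, deriv θ s = k₃ s)
    (hr : Differentiable ℝ r) (hf : Differentiable ℝ f)
    (h1 : ∀ s, deriv r s = f s * k₃ s)
    (h2 : ∀ s, deriv f s = k₃ s * r s) :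
    (∃ a : ℝ, ∀ s, -(r s * Real.sinh (θ s)) + f s * Real.cosh (θ s) = a) ∧
    (∃ b : ℝ, ∀ s, r s * Real.cosh (θ s) - f s * Real.sinh (θ s) = b) := by
  have hθs (s : ℝ) : HasDerivAt θ (k₃ s) s := hθ' s ▸ (hθ s).hasDerivAt
  have hrs (s : ℝ) : HasDerivAt r (f s * k₃ s) s := h1 s ▸ (hr s).hasDerivAt
  have hfs (s : ℝ) : HasDerivAt f (k₃ s * r s) s := h2 s ▸ (hf s).hasDerivAt
  exact ⟨exists_forall_eq_of_hasDerivAt_zero fun s =>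
      hasDerivAt_neg_mul_sinh_add_mul_cosh (hθs s) (hrs s) (hfs s),
    exists_forall_eq_of_hasDerivAt_zero fun s =>
      hasDerivAt_mul_cosh_sub_mul_sinh (hθs s) (hrs s) (hfs s)⟩

theorem stmt_16 (θ k₃ r f : ℝ → ℝ)
    (hθ : Differentiable ℝ θ) (hθ' : ∀ s, deriv θ s = k₃ s)
    (hk₃ne : ∀ s, k₃ s ≠ 0)
    (hr : Differentiable ℝ r) (hf : Differentiable ℝ f)
    (h1 : ∀ s, deriv r s = f s * k₃ s)
    (h2 : ∀ s, deriv f s = k₃ s * r s) :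
    (∃ a : ℝ, ∀ s, -(r s * Real.sinh (θ s)) + f s * Real.cosh (θ s) = a) ∧
    (∃ b : ℝ, ∀ s, r s * Real.cosh (θ s) - f s * Real.sinh (θ s) = b) :=
  stmt_16_general θ k₃ r f hθ hθ' hr hf h1 h2
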